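/- arXiv:math/0509540 — 9 statements merged into one kernel-verified Lean document; each statement's English description precedes it below -/
import Mathlib

section
/- Writing Δ = Σ dᵢ tⁱ, the coefficients of the discriminant of W satisfy d₆ = b³, d₇ = a·b², d₈ = d² + a²·b, and d₉ = a³ + b²·ã₂(0), where ã₂(0) denotes the constant coefficient of ã₂. -/
open Polynomial

/-- Case (ii): `a₁ = t²`. Writing `Δ = Σ dᵢ tⁱ`, the coefficients of the discriminant satisfy
`d₆ = b³`, `d₇ = a·b²`, `d₈ = d² + a²·b` and `d₉ = a³ + b²·ã₂(0)`. -/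
theorem discriminant_coeffs_case_ii (K : Type*) [Field K] [CharP K 2]
    (a b c d : K) (a₂' a₆ : K[X]) (h₂ : a₂'.degree ≤ 3) (h₆ : a₆.degree ≤ 12)
    (W : WeierstrassCurve K[X])
    (ha₁ : W.a₁ = X ^ 2) (ha₂ : W.a₂ = X * a₂') (ha₃ : W.a₃ = C a * X + C b)
    (ha₄ : W.a₄ = C c * X + C d) (ha₆ : W.a₆ = a₆) :
    W.Δ.coeff 6 = b ^ 3 ∧ W.Δ.coeff 7 = a * b ^ 2 ∧
      W.Δ.coeff 8 = d ^ 2 + a ^ 2 * b ∧ W.Δ.coeff 9 = a ^ 3 + b ^ 2 * a₂'.coeff 0 := by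
  have h2 : (2 : K) = 0 := CharP.cast_eq_zero K 2
  have h2P : (2 : K[X]) = 0 := by
    rw [← map_ofNat (C : K →+* K[X]) 2, h2, map_zero]
  have hΔ : W.Δ =
      a₆ * X ^ 12 + C (a * c) * X ^ 12 + C (a * d + b * c) * X ^ 11 + C (b * d) * X ^ 10 +
      C (c ^ 2) * X ^ 10 + C (2 * (c * d)) * X ^ 9 + C (d ^ 2) * X ^ 8 +
      a₂' * C (a ^ 2) * X ^ 11 + a₂' * C (2 * (a * b)) * X ^ 10 + a₂' * C (b ^ 2) * X ^ 9 +
      C (a ^ 3) * X ^ 9 + C (3 * (a ^ 2 * b)) * X ^ 8 + C (3 * (a * b ^ 2)) * X ^ 7 +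
      C (b ^ 3) * X ^ 6 + (C a * X + C b) ^ 4 := by
    rw [WeierstrassCurve.Δ, WeierstrassCurve.b₂, WeierstrassCurve.b₄, WeierstrassCurve.b₆,
      WeierstrassCurve.b₈, ha₁, ha₂, ha₃, ha₄, ha₆]
    simp only [C_mul, C_add, C_pow, map_ofNat]
    linear_combination (((-216):K[X]) * a₆^2 + ((-32):K[X]) * C d^3 + ((-108):K[X]) * C b^2 * a₆ + ((-14):K[X]) * C b^4 + (144:K[X]) * (X:K[X]) * C d * a₂' * a₆ + ((-96):K[X]) * (X:K[X]) * C c * C d^2 + (36:K[X]) * (X:K[X]) * C b^2 * C d * a₂' + ((-216):K[X]) * (X:K[X]) * C a * C b * a₆ + ((-56):K[X]) * (X:K[X]) * C a * C b^3 + (8:K[X]) * (X:K[X])^2 * C d^2 * a₂'^2 + (144:K[X]) * (X:K[X])^2 * C c * a₂' * a₆ + ((-96):K[X]) * (X:K[X])^2 * C c^2 * C d + ((-48):K[X]) * (X:K[X])^2 * C b * C d^2 + (36:K[X]) * (X:K[X])^2 * C b^2 * C c * a₂' + (72:K[X]) * (X:K[X])^2 * C a * C b * C d * a₂' + ((-108):K[X])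 * (X:K[X])^2 * C a^2 * a₆ + ((-84):K[X]) * (X:K[X])^2 * C a^2 * C b^2 + ((-32):K[X]) * (X:K[X])^3 * a₂'^3 * a₆ + (16:K[X]) * (X:K[X])^3 * C c * C d * a₂'^2 + ((-32):K[X]) * (X:K[X])^3 * C c^3 + (72:K[X]) * (X:K[X])^3 * C b * a₂' * a₆ + ((-96):K[X]) * (X:K[X])^3 * C b * C c * C d + ((-8):K[X]) * (X:K[X])^3 * C b^2 * a₂'^3 + (18:K[X]) * (X:K[X])^3 * C b^3 * a₂' + ((-48):K[X]) * (X:K[X])^3 * C a * C d^2 + (72:K[X]) * (X:K[X])^3 * C a * C b * C c * a₂' + (36:K[X]) * (X:K[X])^3 * C a^2 * C d * a₂' + ((-56):K[X]) * (X:K[X])^3 * C a^3 * C b + (36:K[X]) * (X:K[X])^4 * C d * a₆ + (8:K[X]) * (X:K[X])^4 * C c^2 * a₂'^2 + (8:K[X]) * (X:K[X])^4 * C b * C d * a₂'^2 + ((-48):K[X]) * (X:K[X])^4 * C b * C c^2 + ((-15):K[X]) * (X:K[X])^4 * C b^2 * C d + (72:K[X]) * (X:K[X])^4 * C a * a₂'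 * a₆ + ((-96):K[X]) * (X:K[X])^4 * C a * C c * C d + ((-16):K[X]) * (X:K[X])^4 * C a * C b * a₂'^3 + (54:K[X]) * (X:K[X])^4 * C a * C b^2 * a₂' + (36:K[X]) * (X:K[X])^4 * C a^2 * C c * a₂' + ((-14):K[X]) * (X:K[X])^4 * C a^4 + (4:K[X]) * (X:K[X])^5 * C d^2 * a₂' + (36:K[X]) * (X:K[X])^5 * C c * a₆ + (8:K[X]) * (X:K[X])^5 * C b * C c * a₂'^2 + ((-15):K[X]) * (X:K[X])^5 * C b^2 * C c + (8:K[X]) * (X:K[X])^5 * C a * C d * a₂'^2 + ((-48):K[X]) * (X:K[X])^5 * C a * C c^2 + ((-30):K[X]) * (X:K[X])^5 * C a * C b * C d + ((-8):K[X]) * (X:K[X])^5 * C a^2 * a₂'^3 + (54:K[X]) * (X:K[X])^5 * C a^2 * C b * a₂' + ((-24):K[X]) * (X:K[X])^6 * a₂'^2 * a₆ + (8:K[X]) * (X:K[X])^6 * C c * C d * a₂' + (18:K[X]) * (X:K[X])^6 * C b * a₆ + ((-4):K[X]) * (X:K[X])^6 * C b^2 * a₂'^2 + (8:K[X]) * (X:K[X])^6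 * C a * C c * a₂'^2 + ((-30):K[X]) * (X:K[X])^6 * C a * C b * C c + ((-15):K[X]) * (X:K[X])^6 * C a^2 * C d + (18:K[X]) * (X:K[X])^6 * C a^3 * a₂' + (4:K[X]) * (X:K[X])^7 * C c^2 * a₂' + (4:K[X]) * (X:K[X])^7 * C b * C d * a₂' + (18:K[X]) * (X:K[X])^7 * C a * a₆ + ((-8):K[X]) * (X:K[X])^7 * C a * C b * a₂'^2 + ((-15):K[X]) * (X:K[X])^7 * C a^2 * C c + (4:K[X]) * (X:K[X])^8 * C b * C c * a₂' + (4:K[X]) * (X:K[X])^8 * C a * C d * a₂' + ((-4):K[X]) * (X:K[X])^8 * C a^2 * a₂'^2 + ((-6):K[X]) * (X:K[X])^9 * a₂' * a₆ + ((-1):K[X]) * (X:K[X])^9 * C b^2 * a₂' + (4:K[X]) * (X:K[X])^9 * C a * C c * a₂' + ((-2):K[X]) * (X:K[X])^10 * C a * C b * a₂' + ((-1):K[X]) * (X:K[X])^11 * C a^2 * a₂' + ((-1):K[X]) * (X:K[X])^12 * a₆) * h2P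
  have hpow : ((C a * X + C b) ^ 4 : K[X]) =
      C (a ^ 4) * X ^ 4 + C (4 * (a ^ 3 * b)) * X ^ 3 + C (6 * (a ^ 2 * b ^ 2)) * X ^ 2 +
      C (4 * (a * b ^ 3)) * X + C (b ^ 4) := by
    simp only [C_mul, C_add, C_pow, map_ofNat]
    ring
  rw [hΔ, hpow]
  refine ⟨?_, ?_, ?_, ?_⟩ <;>
    simp only [coeff_add, coeff_C_mul, coeff_mul_X_pow', coeff_X_pow, coeff_C, coeff_mul_C,
      coeff_X] <;>
    norm_num [h2]
  · linear_combination a * b ^ 2 * h2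
  · linear_combination a ^ 2 * b * h2
  · linear_combination c * d * h2
end

section
/- The coefficient of t⁵ in the discriminant Δ of W is zero. -/
open Polynomial

/-- Case (ii): `a₁ = t²`. The coefficient of `t⁵` in the discriminant vanishes. -/
theorem discriminant_coeff_five_case_ii (K : Type*) [Field K] [CharP K 2]
    (a b c d : K) (a₂' a₆ : K[X]) (h₂ : a₂'.degree ≤ 3) (h₆ : a₆.degree ≤ 12)
    (W : WeierstrassCurve K[X])
    (ha₁ : W.a₁ = X ^ 2) (ha₂ : W.a₂ = X * a₂') (ha₃ : W.a₃ = C a * X + C b)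
    (ha₄ : W.a₄ = C c * X + C d) (ha₆ : W.a₆ = a₆) :
    W.Δ.coeff 5 = 0 := by
  have h2 : (2 : K[X]) = 0 := by
    rw [show (2 : K[X]) = C 2 from (map_ofNat C 2).symm, CharTwo.two_eq_zero, map_zero]
  have hΔ : W.Δ = W.b₈ * X ^ 8 + (C (a ^ 4) * X ^ 4 + C (b ^ 4))
      + (C a * X + C b) ^ 3 * X ^ 6 := by
    simp only [WeierstrassCurve.Δ, WeierstrassCurve.b₂, WeierstrassCurve.b₄,
      WeierstrassCurve.b₆, WeierstrassCurve.b₈, ha₁, ha₂, ha₃, ha₄, ha₆, map_pow]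
    linear_combination ((-216)*a₆^2 + (-32)*(C d)^3 + (-108)*(C b)^2*a₆ + (-14)*(C b)^4 + (144)*X*C d*a₂'*a₆ + (-96)*X*C c*(C d)^2 + (36)*X*(C b)^2*C d*a₂' + (-216)*X*C a*C b*a₆ + (-54)*X*C a*(C b)^3 + (8)*X^2*(C d)^2*a₂'^2 + (144)*X^2*C c*a₂'*a₆ + (-96)*X^2*(C c)^2*C d + (-48)*X^2*C b*(C d)^2 + (36)*X^2*(C b)^2*C c*a₂' + (72)*X^2*C a*C b*C d*a₂' + (-108)*X^2*(C a)^2*a₆ + (-81)*X^2*(C a)^2*(C b)^2 + (-32)*X^3*a₂'^3*a₆ + (16)*X^3*C c*C d*a₂'^2 + (-32)*X^3*(C c)^3 + (72)*X^3*C b*a₂'*a₆ + (-96)*X^3*C b*C c*C d + (-8)*X^3*(C b)^2*a₂'^3 + (18)*X^3*(C b)^3*a₂' + (-48)*X^3*C a*(C d)^2 + (72)*X^3*C a*C b*C c*a₂' + (36)*X^3*(C a)^2*C d*a₂' + (-54)*X^3*(C a)^3*C b + (36)*X^4*C d*a₆ + (8)*X^4*(C c)^2*a₂'^2 + (8)*X^4*C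 b*C d*a₂'^2 + (-48)*X^4*C b*(C c)^2 + (-15)*X^4*(C b)^2*C d + (72)*X^4*C a*a₂'*a₆ + (-96)*X^4*C a*C c*C d + (-16)*X^4*C a*C b*a₂'^3 + (54)*X^4*C a*(C b)^2*a₂' + (36)*X^4*(C a)^2*C c*a₂' + (-14)*X^4*(C a)^4 + (4)*X^5*(C d)^2*a₂' + (36)*X^5*C c*a₆ + (8)*X^5*C b*C c*a₂'^2 + (-15)*X^5*(C b)^2*C c + (8)*X^5*C a*C d*a₂'^2 + (-48)*X^5*C a*(C c)^2 + (-30)*X^5*C a*C b*C d + (-8)*X^5*(C a)^2*a₂'^3 + (54)*X^5*(C a)^2*C b*a₂' + (-24)*X^6*a₂'^2*a₆ + (8)*X^6*C c*C d*a₂' + (18)*X^6*C b*a₆ + (-4)*X^6*(C b)^2*a₂'^2 + (8)*X^6*C a*C c*a₂'^2 + (-30)*X^6*C a*C b*C c + (-15)*X^6*(C a)^2*C d + (18)*X^6*(C a)^3*a₂' + (4)*X^7*(C c)^2*a₂' + (4)*X^7*C b*C d*a₂' + (18)*X^7*C a*a₆ + (-8)*X^7*C a*C b*a₂'^2 + (-15)*X^7*(C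 a)^2*C c + (1)*X^8*(C d)^2 + (4)*X^8*C b*C c*a₂' + (4)*X^8*C a*C d*a₂' + (-4)*X^8*(C a)^2*a₂'^2 + (-8)*X^9*a₂'*a₆ + (2)*X^9*C c*C d + (-1)*X^9*(C b)^2*a₂' + (4)*X^9*C a*C c*a₂' + (1)*X^10*(C c)^2 + (1)*X^10*C b*C d + (-2)*X^10*C a*C b*a₂' + (1)*X^11*C b*C c + (1)*X^11*C a*C d + (-1)*X^11*(C a)^2*a₂' + (-1)*X^12*a₆ + (1)*X^12*C a*C c) * h2
  rw [hΔ]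
  simp [coeff_mul_X_pow', coeff_C, ← map_pow]
end

section
/- If the discriminant Δ of W has degree at most 5 as a polynomial in t (i.e. the coefficient of tⁱ in Δ vanishes for all i ≥ 6), then Δ = 0. -/
open Polynomial

/-- Case (ii): `a₁ = t²`. If the discriminant has degree at most 5, i.e. all coefficients of
`tⁱ` vanish for `i ≥ 6`, then the discriminant vanishes identically. -/
theorem discriminant_low_degree_case_ii (K : Type*) [Field K] [CharP K 2]
    (a b c d : K) (a₂' a₆ : K[X]) (h₂ : a₂'.degree ≤ 3) (h₆ : a₆.degree ≤ 12)
    (W : WeierstrassCurve K[X])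
    (ha₁ : W.a₁ = X ^ 2) (ha₂ : W.a₂ = X * a₂') (ha₃ : W.a₃ = C a * X + C b)
    (ha₄ : W.a₄ = C c * X + C d) (ha₆ : W.a₆ = a₆)
    (h : ∀ i : ℕ, 6 ≤ i → W.Δ.coeff i = 0) :
    W.Δ = 0 := by
  have h2K : (2 : K) = 0 := CharTwo.two_eq_zero
  have h2 : (2 : K[X]) = 0 := by
    rw [show (2 : K[X]) = C 2 from (map_ofNat C 2).symm, h2K, map_zero]
  set s : K[X] := C a * X + C b with hs
  have hb₂ : W.b₂ = X ^ 4 := by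
    rw [WeierstrassCurve.b₂, ha₁, ha₂]
    linear_combination (2 * X * a₂') * h2
  have hb₄ : W.b₄ = X ^ 2 * s := by
    rw [WeierstrassCurve.b₄, ha₁, ha₃, ha₄]
    linear_combination (C c * X + C d) * h2
  have hb₆ : W.b₆ = s ^ 2 := by
    rw [WeierstrassCurve.b₆, ha₃, ha₆]
    linear_combination (2 * a₆) * h2
  have hΔ : W.Δ = s ^ 4 + X ^ 6 * (s ^ 3 + X ^ 2 * W.b₈) := by
    rw [WeierstrassCurve.Δ, hb₂, hb₄, hb₆]
    linear_combination (-(X ^ 8) * W.b₈ - 14 * s ^ 4) * h2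
  have hsdeg : (s ^ 4).natDegree ≤ 4 := by
    calc (s ^ 4).natDegree ≤ 4 * s.natDegree := natDegree_pow_le
    _ ≤ 4 * 1 := by
        exact Nat.mul_le_mul_left 4 (natDegree_linear_le)
    _ = 4 := rfl
  have hQ : s ^ 3 + X ^ 2 * W.b₈ = 0 := by
    ext j
    have hj := h (j + 6) (by omega)
    rw [hΔ, coeff_add, coeff_X_pow_mul] at hj
    have hs4 : (s ^ 4).coeff (j + 6) = 0 :=
      coeff_eq_zero_of_natDegree_lt (by omega)
    rw [hs4, zero_add] at hj
    simpa using hj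
  -- b = 0
  have hb : b = 0 := by
    have he := congrArg (eval 0) hQ
    simp [hs] at he
    exact he
  subst hb
  rw [map_zero, add_zero] at hs
  -- b₈ decomposition
  have hb₈ : W.b₈ = X ^ 2 * (X ^ 2 * a₆ + X * C a * (C c * X + C d) + X * a₂' * C a ^ 2
      + C c ^ 2) + C d ^ 2 := by
    rw [WeierstrassCurve.b₈, ha₁, ha₂, ha₃, ha₄, ha₆, hs]
    linear_combination (2 * X * a₂' * a₆ - X ^ 3 * C a * (C c * X + C d)
      - C c ^ 2 * X ^ 2 - C c * C d * X - C d ^ 2) * h2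
  have hb81 : W.b₈.coeff 1 = 0 := by
    rw [hb₈, coeff_add, show (X : K[X]) ^ 2 * (X ^ 2 * a₆ + X * C a * (C c * X + C d)
      + X * a₂' * C a ^ 2 + C c ^ 2) = (X ^ 2 * a₆ + X * C a * (C c * X + C d)
      + X * a₂' * C a ^ 2 + C c ^ 2) * X ^ 2 from mul_comm _ _, coeff_mul_X_pow']
    rw [if_neg (by norm_num), ← C_pow, coeff_C]
    norm_num
  -- a = 0
  have ha : a = 0 := by
    have hc := congrArg (fun p => coeff p 3) hQ
    simp only [hs, coeff_add, coeff_zero] at hc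
    rw [show ((3 : ℕ)) = 1 + 2 from rfl, coeff_X_pow_mul, hb81] at hc
    have h3 : ((C a * X) ^ (1 + 2)).coeff (1 + 2) = a ^ 3 := by
      rw [mul_pow, ← C_pow, coeff_C_mul, coeff_X_pow]
      simp
    rw [h3, add_zero] at hc
    exact pow_eq_zero_iff (n := 3) (by norm_num) |>.mp hc
  rw [hΔ, hQ, mul_zero, add_zero, hs, ha]
  simp
end

section
/- If t⁵ divides the discriminant Δ of W in K[t], then a = 0 and b = 0 (equivalently, a₃ = 0, so the fibre of W at t = 0 is additive). -/
open Polynomial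

/-- Case (ii): `a₁ = t²`. If `t⁵ ∣ Δ`, then `a = 0` and `b = 0`, i.e. `a₃ = 0` and the fibre
at `t = 0` is additive. -/
theorem discriminant_t_five_dvd_case_ii (K : Type*) [Field K] [CharP K 2]
    (a b c d : K) (a₂' a₆ : K[X]) (h₂ : a₂'.degree ≤ 3) (h₆ : a₆.degree ≤ 12)
    (W : WeierstrassCurve K[X])
    (ha₁ : W.a₁ = X ^ 2) (ha₂ : W.a₂ = X * a₂') (ha₃ : W.a₃ = C a * X + C b)
    (ha₄ : W.a₄ = C c * X + C d) (ha₆ : W.a₆ = a₆)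
    (h : X ^ 5 ∣ W.Δ) :
    a = 0 ∧ b = 0 := by
  have h2 : (2 : K[X]) = 0 := by
    have : ((2 : ℕ) : K[X]) = 0 := CharP.cast_eq_zero K[X] 2
    exact_mod_cast this
  set p : K[X] := C a * X + C b with hp
  have hb₂ : W.b₂ = X ^ 4 := by
    rw [WeierstrassCurve.b₂, ha₁, ha₂]
    linear_combination (2 * X * a₂') * h2
  have hb₄ : W.b₄ = X ^ 2 * p := by
    rw [WeierstrassCurve.b₄, ha₁, ha₃, ha₄, hp]
    linear_combination (C c * X + C d) * h2
  have hb₆ : W.b₆ = p ^ 2 := by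
    rw [WeierstrassCurve.b₆, ha₃, ha₆, hp]
    linear_combination (2 * a₆) * h2
  have hΔ : W.Δ = p ^ 4 + X ^ 5 * (X ^ 3 * W.b₈ + X * p ^ 3) := by
    rw [WeierstrassCurve.Δ, hb₂, hb₄, hb₆]
    linear_combination (-(X ^ 8 * W.b₈) - 14 * p ^ 4) * h2
  have hdvd : X ^ 5 ∣ p ^ 4 := by
    have h' : X ^ 5 ∣ X ^ 5 * (X ^ 3 * W.b₈ + X * p ^ 3) := Dvd.intro _ rfl
    have := (hΔ ▸ h).sub h'
    simpa using this
  have hdeg : (p ^ 4).degree < (X ^ 5 : K[X]).degree := by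
    rw [Polynomial.degree_X_pow, hp]
    have hle : ((C a * X + C b) ^ 4).degree ≤ ((4 : ℕ) : WithBot ℕ) := by
      compute_degree
      exact_mod_cast le_refl 4
    refine lt_of_le_of_lt hle ?_
    exact_mod_cast Nat.lt_succ_self 4
  have hp0 : p = 0 := by
    have := Polynomial.eq_zero_of_dvd_of_degree_lt hdvd hdeg
    exact pow_eq_zero_iff (by norm_num) |>.mp this
  have ha : a = 0 := by
    have := congrArg (fun q => Polynomial.coeff q 1) hp0
    simpa [hp] using this
  have hb : b = 0 := by
    have := congrArg (fun q => Polynomial.coeff q 0) hp0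
    simpa [hp] using this
  exact ⟨ha, hb⟩
end

section
/- If t²⁰ divides the discriminant Δ of W in K[t], then a = b = c = d = 0 and t⁸ divides a₆. -/
open Polynomial

/-- Case (ii): `a₁ = t²`. If `t²⁰ ∣ Δ`, then `a = b = c = d = 0` and `t⁸ ∣ a₆`. -/
theorem discriminant_t_twenty_dvd_case_ii (K : Type*) [Field K] [CharP K 2]
    (a b c d : K) (a₂' a₆ : K[X]) (h₂ : a₂'.degree ≤ 3) (h₆ : a₆.degree ≤ 12)
    (W : WeierstrassCurve K[X])
    (ha₁ : W.a₁ = X ^ 2) (ha₂ : W.a₂ = X * a₂') (ha₃ : W.a₃ = C a * X + C b)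
    (ha₄ : W.a₄ = C c * X + C d) (ha₆ : W.a₆ = a₆)
    (h : X ^ 20 ∣ W.Δ) :
    a = 0 ∧ b = 0 ∧ c = 0 ∧ d = 0 ∧ X ^ 8 ∣ a₆ := by
  have h2 : (2 : K[X]) = 0 := by
    have : ((2 : ℕ) : K[X]) = 0 := CharP.cast_eq_zero K[X] 2
    exact_mod_cast this
  set Q : K[X] := (C a * X + C b) ^ 3 + X ^ 2 * (X ^ 4 * a₆ +
      X ^ 2 * (C a * X + C b) * (C c * X + C d) + X * a₂' * (C a * X + C b) ^ 2 +
      (C c * X + C d) ^ 2) with hQ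
  have hΔ : W.Δ = C b ^ 4 + C a ^ 4 * X ^ 4 + Q * X ^ 6 := by
    rw [WeierstrassCurve.Δ, WeierstrassCurve.b₂, WeierstrassCurve.b₄, WeierstrassCurve.b₆,
      WeierstrassCurve.b₈, ha₁, ha₂, ha₃, ha₄, ha₆, hQ]
    linear_combination ((-1) * a₆ * X ^ 12 +
      (-216) * a₆ ^ 2 +
      (-6) * a₂' * a₆ * X ^ 9 +
      (-24) * a₂' ^ 2 * a₆ * X ^ 6 +
      (-32) * a₂' ^ 3 * a₆ * X ^ 3 +
      (36) * C d * a₆ * X ^ 4 +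
      (144) * C d * a₂' * a₆ * X +
      (4) * C d ^ 2 * a₂' * X ^ 5 +
      (8) * C d ^ 2 * a₂' ^ 2 * X ^ 2 +
      (-32) * C d ^ 3 +
      (36) * C c * a₆ * X ^ 5 +
      (144) * C c * a₂' * a₆ * X ^ 2 +
      (8) * C c * C d * a₂' * X ^ 6 +
      (16) * C c * C d * a₂' ^ 2 * X ^ 3 +
      (-96) * C c * C d ^ 2 * X +
      (4) * C c ^ 2 * a₂' * X ^ 7 +
      (8) * C c ^ 2 * a₂' ^ 2 * X ^ 4 +
      (-96) * C c ^ 2 * C d * X ^ 2 +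
      (-32) * C c ^ 3 * X ^ 3 +
      (18) * C b * a₆ * X ^ 6 +
      (72) * C b * a₂' * a₆ * X ^ 3 +
      (4) * C b * C d * a₂' * X ^ 7 +
      (8) * C b * C d * a₂' ^ 2 * X ^ 4 +
      (-48) * C b * C d ^ 2 * X ^ 2 +
      (4) * C b * C c * a₂' * X ^ 8 +
      (8) * C b * C c * a₂' ^ 2 * X ^ 5 +
      (-96) * C b * C c * C d * X ^ 3 +
      (-48) * C b * C c ^ 2 * X ^ 4 +
      (-108) * C b ^ 2 * a₆ +
      (-1) * C b ^ 2 * a₂' * X ^ 9 +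
      (-4) * C b ^ 2 * a₂' ^ 2 * X ^ 6 +
      (-8) * C b ^ 2 * a₂' ^ 3 * X ^ 3 +
      (-15) * C b ^ 2 * C d * X ^ 4 +
      (36) * C b ^ 2 * C d * a₂' * X +
      (-15) * C b ^ 2 * C c * X ^ 5 +
      (36) * C b ^ 2 * C c * a₂' * X ^ 2 +
      (18) * C b ^ 3 * a₂' * X ^ 3 +
      (-14) * C b ^ 4 +
      (18) * C a * a₆ * X ^ 7 +
      (72) * C a * a₂' * a₆ * X ^ 4 +
      (4) * C a * C d * a₂' * X ^ 8 +
      (8) * C a * C d * a₂' ^ 2 * X ^ 5 +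
      (-48) * C a * C d ^ 2 * X ^ 3 +
      (4) * C a * C c * a₂' * X ^ 9 +
      (8) * C a * C c * a₂' ^ 2 * X ^ 6 +
      (-96) * C a * C c * C d * X ^ 4 +
      (-48) * C a * C c ^ 2 * X ^ 5 +
      (-216) * C a * C b * a₆ * X +
      (-2) * C a * C b * a₂' * X ^ 10 +
      (-8) * C a * C b * a₂' ^ 2 * X ^ 7 +
      (-16) * C a * C b * a₂' ^ 3 * X ^ 4 +
      (-30) * C a * C b * C d * X ^ 5 +
      (72) * C a * C b * C d * a₂' * X ^ 2 +
      (-30) * C a * C b * C c * X ^ 6 +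
      (72) * C a * C b * C c * a₂' * X ^ 3 +
      (54) * C a * C b ^ 2 * a₂' * X ^ 4 +
      (-54) * C a * C b ^ 3 * X +
      (-108) * C a ^ 2 * a₆ * X ^ 2 +
      (-1) * C a ^ 2 * a₂' * X ^ 11 +
      (-4) * C a ^ 2 * a₂' ^ 2 * X ^ 8 +
      (-8) * C a ^ 2 * a₂' ^ 3 * X ^ 5 +
      (-15) * C a ^ 2 * C d * X ^ 6 +
      (36) * C a ^ 2 * C d * a₂' * X ^ 3 +
      (-15) * C a ^ 2 * C c * X ^ 7 +
      (36) * C a ^ 2 * C c * a₂' * X ^ 4 +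
      (54) * C a ^ 2 * C b * a₂' * X ^ 5 +
      (-81) * C a ^ 2 * C b ^ 2 * X ^ 2 +
      (18) * C a ^ 3 * a₂' * X ^ 6 +
      (-54) * C a ^ 3 * C b * X ^ 3 +
      (-14) * C a ^ 4 * X ^ 4) * h2
  have hco := X_pow_dvd_iff.mp h
  have hb : b = 0 := by
    have h0 := hco 0 (by norm_num)
    rw [hΔ] at h0
    simp only [coeff_add, ← C_pow, coeff_mul_X_pow', coeff_C_mul, coeff_X_pow, coeff_C] at h0
    norm_num at h0
    exact h0
  have ha : a = 0 := by
    have h4 := hco 4 (by norm_num)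
    rw [hΔ] at h4
    simp only [coeff_add, ← C_pow, coeff_mul_X_pow', coeff_C_mul, coeff_X_pow, coeff_C] at h4
    norm_num at h4
    exact h4
  have hΔ2 : W.Δ = C d ^ 2 * X ^ 8 + C c ^ 2 * X ^ 10 + a₆ * X ^ 12 := by
    rw [hΔ, hQ, ha, hb]
    simp only [map_zero]
    linear_combination (C c * C d * X ^ 9) * h2
  have hd : d = 0 := by
    have h8 := hco 8 (by norm_num)
    rw [hΔ2] at h8
    simp only [coeff_add, ← C_pow, coeff_mul_X_pow', coeff_C_mul, coeff_X_pow, coeff_C] at h8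
    norm_num at h8
    exact h8
  have hc : c = 0 := by
    have h10 := hco 10 (by norm_num)
    rw [hΔ2] at h10
    simp only [coeff_add, ← C_pow, coeff_mul_X_pow', coeff_C_mul, coeff_X_pow, coeff_C] at h10
    norm_num at h10
    exact h10
  refine ⟨ha, hb, hc, hd, ?_⟩
  have hΔ3 : W.Δ = a₆ * X ^ 12 := by
    rw [hΔ2, hc, hd]; simp
  rw [hΔ3, show (X ^ 20 : K[X]) = X ^ 8 * X ^ 12 by ring] at h
  exact (mul_dvd_mul_iff_right (pow_ne_zero 12 X_ne_zero)).mp h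
end

section
/- If (t + 1)²⁰ divides the discriminant Δ of W in K[t], then Δ = 0. -/
set_option maxRecDepth 40000
set_option maxHeartbeats 1600000

open Polynomial

/-- Case (iii): `a₁ = t`. If `(t+1)²⁰ ∣ Δ`, then `Δ = 0`. -/
theorem discriminant_t_add_one_twenty_dvd_case_iii (K : Type*) [Field K] [CharP K 2]
    (a b c d : K) (a₂ a₆ : K[X]) (h₂ : a₂.degree ≤ 4) (h₆ : a₆.degree ≤ 12)
    (W : WeierstrassCurve K[X])
    (ha₁ : W.a₁ = X) (ha₂ : W.a₂ = a₂) (ha₃ : W.a₃ = C a * X ^ 6 + C b)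
    (ha₄ : W.a₄ = C c * X ^ 8 + C d) (ha₆ : W.a₆ = a₆)
    (h : (X + 1) ^ 20 ∣ W.Δ) :
    W.Δ = 0 := by
  have h2 : (2 : K[X]) = 0 := by exact_mod_cast CharP.cast_eq_zero K[X] 2
  have hn2 : a₂.natDegree ≤ 4 := natDegree_le_iff_degree_le.mpr h₂
  have hn6 : a₆.natDegree ≤ 12 := natDegree_le_iff_degree_le.mpr h₆
  have hc2 : ∀ n, 5 ≤ n → a₂.coeff n = 0 := fun n hn =>
    coeff_eq_zero_of_natDegree_lt (by omega)
  have hc6 : ∀ n, 13 ≤ n → a₆.coeff n = 0 := fun n hn =>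
    coeff_eq_zero_of_natDegree_lt (by omega)
  -- explicit formula for the discriminant in characteristic two
  have hΔ : W.Δ = (C a)^4 * X^24 + (C a)^3 * X^21 + (C c)^2 * X^20 + (C a * C c) * X^19
      + (C a)^2 * a₂ * X^16 + ((C a)^2 * C b) * X^15 + (C b * C c) * X^13
      + (C a * C d) * X^11 + (C a * (C b)^2) * X^9 + a₆ * X^6 + (C b * C d) * X^5
      + ((C b)^2 * a₂ + (C d)^2) * X^4 + (C b)^3 * X^3 + (C b)^4 := by
    simp only [WeierstrassCurve.Δ, WeierstrassCurve.b₂, WeierstrassCurve.b₄,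
      WeierstrassCurve.b₆, WeierstrassCurve.b₈, ha₁, ha₂, ha₃, ha₄, ha₆]
    linear_combination ((-216) * a₆^2 + (-32) * a₂^3 * a₆ + (144) * (C d) * a₂ * a₆ + (8) * (C d)^2 * a₂^2 + (-32) * (C d)^3 + (-108) * (C b)^2 * a₆ + (-8) * (C b)^2 * a₂^3 + (36) * (C b)^2 * (C d) * a₂ + (-14) * (C b)^4 + (72) * X * (C b) * a₂ * a₆ + (8) * X * (C b) * (C d) * a₂^2 + (-48) * X * (C b) * (C d)^2 + (18) * X * (C b)^3 * a₂ + (-24) * X^2 * a₂^2 * a₆ + (36) * X^2 * (C d) * a₆ + (4) * X^2 * (C d)^2 * a₂ + (-4) * X^2 * (C b)^2 * a₂^2 + (-15) * X^2 * (C b)^2 * (C d) + (18) * X^3 * (C b) * a₆ + (4) * X^3 * (C b) * (C d) * a₂ + (-6) * X^4 * a₂ * a₆ + (-1) * X^4 * (C b)^2 * a₂ + (-1) * X^6 * a₆ + (-216) * X^6 * (C a) * (C b) * a₆ + (-16) * X^6 * (C a) * (C b) * a₂^3 + (72) * X^6 * (C a) * (C b) * (C d) * a₂ + (-54) * X^6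 * (C a) * (C b)^3 + (72) * X^7 * (C a) * a₂ * a₆ + (8) * X^7 * (C a) * (C d) * a₂^2 + (-48) * X^7 * (C a) * (C d)^2 + (54) * X^7 * (C a) * (C b)^2 * a₂ + (144) * X^8 * (C c) * a₂ * a₆ + (16) * X^8 * (C c) * (C d) * a₂^2 + (-96) * X^8 * (C c) * (C d)^2 + (36) * X^8 * (C b)^2 * (C c) * a₂ + (-8) * X^8 * (C a) * (C b) * a₂^2 + (-30) * X^8 * (C a) * (C b) * (C d) + (8) * X^9 * (C b) * (C c) * a₂^2 + (-96) * X^9 * (C b) * (C c) * (C d) + (18) * X^9 * (C a) * a₆ + (4) * X^9 * (C a) * (C d) * a₂ + (1) * X^9 * (C a) * (C b)^2 + (36) * X^10 * (C c) * a₆ + (8) * X^10 * (C c) * (C d) * a₂ + (-15) * X^10 * (C b)^2 * (C c) + (-1) * X^10 * (C a) * (C b) * a₂ + (4) * X^11 * (C b) * (C c) * a₂ + (1) * X^12 * (C c) * (C d) + (-108) * X^12 * (C a)^2 * a₆ + (-8) * X^12 * (C a)^2 * a₂^3 + (36) * X^12 * (C a)^2 * (C d) * a₂ + (-81) * X^12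 * (C a)^2 * (C b)^2 + (54) * X^13 * (C a)^2 * (C b) * a₂ + (72) * X^14 * (C a) * (C b) * (C c) * a₂ + (-4) * X^14 * (C a)^2 * a₂^2 + (-15) * X^14 * (C a)^2 * (C d) + (8) * X^15 * (C a) * (C c) * a₂^2 + (-96) * X^15 * (C a) * (C c) * (C d) + (1) * X^15 * (C a)^2 * (C b) + (8) * X^16 * (C c)^2 * a₂^2 + (-96) * X^16 * (C c)^2 * (C d) + (-30) * X^16 * (C a) * (C b) * (C c) + (-1) * X^16 * (C a)^2 * a₂ + (-48) * X^17 * (C b) * (C c)^2 + (4) * X^17 * (C a) * (C c) * a₂ + (4) * X^18 * (C c)^2 * a₂ + (-54) * X^18 * (C a)^3 * (C b) + (18) * X^19 * (C a)^3 * a₂ + (36) * X^20 * (C a)^2 * (C c) * a₂ + (-15) * X^22 * (C a)^2 * (C c) + (-48) * X^23 * (C a) * (C c)^2 + (-32) * X^24 * (C c)^3 + (-14) * X^24 * (C a)^4) * h2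
  by_contra hne
  obtain ⟨q, hq⟩ := h
  have hqne : q ≠ 0 := fun h0 => hne (by rw [hq, h0, mul_zero])
  -- degree bounds
  have hX1 : ((X + 1 : K[X])).natDegree = 1 := by rw [← C_1]; exact natDegree_X_add_C 1
  have hX1ne : (X + 1 : K[X]) ≠ 0 := by rw [← C_1]; exact X_add_C_ne_zero 1
  have hΔdeg : W.Δ.natDegree ≤ 24 := by
    rw [hΔ]; compute_degree; omega
  have hq4 : q.natDegree ≤ 4 := by
    rw [hq, natDegree_mul (pow_ne_zero _ hX1ne) hqne, natDegree_pow, hX1] at hΔdeg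
    omega
  have h5 : ∀ n, 5 ≤ n → q.coeff n = 0 := fun n hn =>
    coeff_eq_zero_of_natDegree_lt (by omega)
  -- rewrite (X+1)^20 in characteristic two
  have hq' : W.Δ = q * X^20 + q * X^16 + q * X^4 + q := by
    rw [hq]
    linear_combination ((10)*X^1 + (95)*X^2 + (570)*X^3 + (2422)*X^4 + (7752)*X^5
      + (19380)*X^6 + (38760)*X^7 + (62985)*X^8 + (83980)*X^9 + (92378)*X^10
      + (83980)*X^11 + (62985)*X^12 + (38760)*X^13 + (19380)*X^14 + (7752)*X^15
      + (2422)*X^16 + (570)*X^17 + (95)*X^18 + (10)*X^19 : K[X]) * q * h2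
  have E1 : W.Δ.coeff 1 = 0 := by
    rw [hΔ]; simp only [coeff_add, coeff_mul_X_pow']; norm_num
    simp only [← C_pow, coeff_C_mul, coeff_C]; norm_num
  have Q1 : W.Δ.coeff 1 = q.coeff 1 := by
    rw [hq']; simp only [coeff_add, coeff_mul_X_pow']; norm_num
  have E21 : W.Δ.coeff 21 = a^3 := by
    rw [hΔ]; simp only [coeff_add, coeff_mul_X_pow']; norm_num
    simp only [← C_pow, coeff_C_mul, coeff_C]
    norm_num [hc2 5 (by norm_num), hc2 17 (by norm_num), hc6 15 (by norm_num)]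
  have Q21 : W.Δ.coeff 21 = q.coeff 1 := by
    rw [hq']; simp only [coeff_add, coeff_mul_X_pow']
    norm_num [h5 5 (by norm_num), h5 17 (by norm_num), h5 21 (by norm_num)]
  have ha : a = 0 := by
    have : a ^ 3 = 0 := by rw [← E21, Q21, ← Q1, E1]
    exact pow_eq_zero_iff (by norm_num) |>.mp this
  have E3 : W.Δ.coeff 3 = b^3 := by
    rw [hΔ]; simp only [coeff_add, coeff_mul_X_pow']; norm_num
    simp only [← C_pow, coeff_C_mul, coeff_C]; norm_num
  have Q3 : W.Δ.coeff 3 = q.coeff 3 := by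
    rw [hq']; simp only [coeff_add, coeff_mul_X_pow']; norm_num
  have E23 : W.Δ.coeff 23 = 0 := by
    rw [hΔ]; simp only [coeff_add, coeff_mul_X_pow']; norm_num
    simp only [← C_pow, coeff_C_mul, coeff_C]
    norm_num [hc2 7 (by norm_num), hc2 19 (by norm_num), hc6 17 (by norm_num)]
  have Q23 : W.Δ.coeff 23 = q.coeff 3 := by
    rw [hq']; simp only [coeff_add, coeff_mul_X_pow']
    norm_num [h5 7 (by norm_num), h5 19 (by norm_num), h5 23 (by norm_num)]
  have hb : b = 0 := by
    have : b ^ 3 = 0 := by rw [← E3, Q3, ← Q23, E23]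
    exact pow_eq_zero_iff (by norm_num) |>.mp this
  have E0 : W.Δ.coeff 0 = b^4 := by
    rw [hΔ]; simp only [coeff_add, coeff_mul_X_pow']; norm_num
    simp only [← C_pow, coeff_C_mul, coeff_C]; norm_num
  have Q0 : W.Δ.coeff 0 = q.coeff 0 := by
    rw [hq']; simp only [coeff_add, coeff_mul_X_pow']; norm_num
  have E2 : W.Δ.coeff 2 = 0 := by
    rw [hΔ]; simp only [coeff_add, coeff_mul_X_pow']; norm_num
    simp only [← C_pow, coeff_C_mul, coeff_C]; norm_num
  have Q2 : W.Δ.coeff 2 = q.coeff 2 := by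
    rw [hq']; simp only [coeff_add, coeff_mul_X_pow']; norm_num
  have E24 : W.Δ.coeff 24 = a^4 := by
    rw [hΔ]; simp only [coeff_add, coeff_mul_X_pow']; norm_num
    simp only [← C_pow, coeff_C_mul, coeff_C]
    norm_num [hc2 8 (by norm_num), hc2 20 (by norm_num), hc6 18 (by norm_num)]
  have Q24 : W.Δ.coeff 24 = q.coeff 4 := by
    rw [hq']; simp only [coeff_add, coeff_mul_X_pow']
    norm_num [h5 8 (by norm_num), h5 20 (by norm_num), h5 24 (by norm_num)]
  have hq0 : q = 0 := by
    ext n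
    rcases le_or_gt n 4 with hn | hn
    · interval_cases n
      · rw [coeff_zero, ← Q0, E0, hb]; ring
      · rw [coeff_zero, ← Q1, E1]
      · rw [coeff_zero, ← Q2, E2]
      · rw [coeff_zero, ← Q3, E3, hb]; ring
      · rw [coeff_zero, ← Q24, E24, ha]; ring
    · rw [coeff_zero]; exact h5 n (by omega)
  exact hne (by rw [hq, hq0, mul_zero])
end

section
/- If (t + 1)¹⁹ divides the discriminant Δ of W in K[t], then Δ = 0. -/
/-!
In characteristic 2, `Δ = t⁴ b₈ + a₃⁴ + t³ a₃³` with `deg b₈ ≤ 16`, so `deg Δ ≤ 24` and the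
coefficients of `Δ` in degrees `1, 2, 3` and `21, 22, 23` come from `a₃ = a t⁶ + b` alone.
Since `(t + 1)¹⁹ = (t¹⁶ + 1)(t³ + t² + t + 1)`, every multiple `f = (t + 1)¹⁹ g` of degree `≤ 24`
has `f_k + f_{k+20} = g(1)` for `k = 1, 2, 3`; for `Δ` these three sums are `a³, 0, b³`, whence
`a = b = 0`. Then `Δ = t⁴ b₈` has degree `≤ 20` but is divisible by the coprime polynomials `t⁴`
and `(t + 1)¹⁹`, so `Δ = 0`.
-/

open Polynomial

namespace Polynomial

variable {R : Type*} [CommRing R]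

section CharTwo

variable [CharP R 2]

theorem X_add_one_pow_nineteen_of_char_two :
    (X + 1 : R[X]) ^ 19 = (X ^ 16 + 1) * (X ^ 3 + X ^ 2 + X + 1) := by
  have h16 : (X + 1 : R[X]) ^ 16 = X ^ 16 + 1 := by
    simpa using add_pow_char_pow (X : R[X]) 1 (p := 2) (n := 4)
  rw [show 19 = 16 + 3 by rfl, pow_add, h16]
  linear_combination (X ^ 16 + 1) * (X ^ 2 + X) * CharP.cast_eq_zero R[X] 2

theorem coeff_add_coeff_add_twenty_X_add_one_pow_nineteen_mul {g : R[X]} (hg : g.natDegree ≤ 5)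
    {k : ℕ} (hk₁ : 1 ≤ k) (hk₃ : k ≤ 3) :
    ((X + 1) ^ 19 * g).coeff k + ((X + 1) ^ 19 * g).coeff (k + 20) = g.eval 1 := by
  have hgc : ∀ m, 5 < m → g.coeff m = 0 := fun m hm => coeff_eq_zero_of_natDegree_lt (by omega)
  rw [eval_eq_sum_range' (n := 6) (by omega), X_add_one_pow_nineteen_of_char_two,
    show ((X ^ 16 + 1) * (X ^ 3 + X ^ 2 + X + 1) : R[X]) * g = X ^ 19 * g + X ^ 18 * g +
      X ^ 17 * g + X ^ 16 * g + X ^ 3 * g + X ^ 2 * g + X * g + g by ring]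
  interval_cases k <;> simp [coeff_X_pow_mul', coeff_X_mul, Finset.sum_range_succ, hgc] <;> ring

theorem coeff_add_coeff_add_twenty_eq_of_X_add_one_pow_nineteen_dvd {f : R[X]}
    (hf : f.natDegree ≤ 24) (h : (X + 1) ^ 19 ∣ f) {j k : ℕ} (hj₁ : 1 ≤ j) (hj₃ : j ≤ 3)
    (hk₁ : 1 ≤ k) (hk₃ : k ≤ 3) : f.coeff j + f.coeff (j + 20) = f.coeff k + f.coeff (k + 20) := by
  have := CharP.nontrivial_of_char_ne_one (R := R) (v := 2) (by norm_num)
  obtain ⟨g, rfl⟩ := h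
  have hg : g.natDegree ≤ 5 := by
    rcases eq_or_ne g 0 with rfl | hg₀
    · simp
    have hmonic : ((X + 1 : R[X]) ^ 19).Monic := (monic_X_add_C 1).pow 19
    have h19 : ((X + 1 : R[X]) ^ 19).natDegree = 19 := by compute_degree!
    rw [hmonic.natDegree_mul' hg₀, h19] at hf
    omega
  rw [coeff_add_coeff_add_twenty_X_add_one_pow_nineteen_mul hg hj₁ hj₃,
    coeff_add_coeff_add_twenty_X_add_one_pow_nineteen_mul hg hk₁ hk₃]

end CharTwo

theorem eq_zero_of_X_pow_dvd_of_X_add_one_pow_dvd [Nontrivial R] {f : R[X]} {m n : ℕ}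
    (hX : X ^ m ∣ f) (hX₁ : (X + 1) ^ n ∣ f) (hf : f.natDegree < m + n) : f = 0 := by
  by_contra hf₀
  have hcop : IsCoprime (X ^ m : R[X]) ((X + 1) ^ n) :=
    (show IsCoprime (X : R[X]) (X + 1) from ⟨-1, 1, by ring⟩).pow
  refine ((monic_X_pow m).mul ((monic_X_add_C 1).pow n)).not_dvd_of_natDegree_lt hf₀ ?_
    (hcop.mul_dvd hX hX₁)
  rwa [(monic_X_pow m).natDegree_mul ((monic_X_add_C 1).pow n), natDegree_X_pow,
    (monic_X_add_C 1).natDegree_pow, natDegree_X_add_C, mul_one]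

end Polynomial

namespace WeierstrassCurve

variable {R : Type*} [CommRing R] [CharP R 2] {W : WeierstrassCurve R[X]} {a b : R}

theorem Δ_eq_X_pow_four_mul_b₈_add_of_char_two (ha₁ : W.a₁ = X)
    (ha₃ : W.a₃ = C a * X ^ 6 + C b) :
    W.Δ = X ^ 4 * W.b₈ + (C (a ^ 4) * X ^ 24 + C (a ^ 3) * X ^ 21 + C (a ^ 2 * b) * X ^ 15 +
      C (a * b ^ 2) * X ^ 9 + C (b ^ 3) * X ^ 3 + C (b ^ 4)) := by
  rw [Δ_of_char_two, ha₁, ha₃]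
  simp only [C_mul, C_pow]
  linear_combination (2 * C a ^ 3 * C b * X ^ 18 + 3 * C a ^ 2 * C b ^ 2 * X ^ 12 +
    2 * C a * C b ^ 3 * X ^ 6 + C a ^ 2 * C b * X ^ 15 + C a * C b ^ 2 * X ^ 9) *
    CharP.cast_eq_zero R[X] 2

theorem natDegree_b₈_le {c d : R} {a₂ a₆ : R[X]} (h₂ : a₂.degree ≤ 4) (h₆ : a₆.degree ≤ 12)
    (ha₁ : W.a₁ = X) (ha₂ : W.a₂ = a₂) (ha₃ : W.a₃ = C a * X ^ 6 + C b)
    (ha₄ : W.a₄ = C c * X ^ 8 + C d) (ha₆ : W.a₆ = a₆) : W.b₈.natDegree ≤ 16 := by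
  rw [b₈_of_char_two, ha₁, ha₂, ha₃, ha₄, ha₆]
  have h₂' := natDegree_le_of_degree_le (n := 4) h₂
  have h₆' := natDegree_le_of_degree_le (n := 12) h₆
  compute_degree
  simp only [max_le_iff]
  omega

theorem coeff_Δ_add_coeff_Δ_add_twenty (hb₈ : W.b₈.natDegree ≤ 16) (ha₁ : W.a₁ = X)
    (ha₃ : W.a₃ = C a * X ^ 6 + C b) :
    W.Δ.coeff 1 + W.Δ.coeff 21 = a ^ 3 ∧ W.Δ.coeff 2 + W.Δ.coeff 22 = 0 ∧
      W.Δ.coeff 3 + W.Δ.coeff 23 = b ^ 3 := by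
  have hc : ∀ m, 16 < m → W.b₈.coeff m = 0 := fun m hm => coeff_eq_zero_of_natDegree_lt (by omega)
  rw [Δ_eq_X_pow_four_mul_b₈_add_of_char_two ha₁ ha₃]
  simp only [coeff_add, coeff_C_mul_X_pow, coeff_C, coeff_X_pow_mul']
  norm_num [hc]

end WeierstrassCurve

/-- Case (iii): `a₁ = t`. If `(t+1)¹⁹ ∣ Δ`, then `Δ = 0`. -/
theorem discriminant_t_add_one_nineteen_dvd_case_iii (K : Type*) [Field K] [CharP K 2]
    (a b c d : K) (a₂ a₆ : K[X]) (h₂ : a₂.degree ≤ 4) (h₆ : a₆.degree ≤ 12)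
    (W : WeierstrassCurve K[X])
    (ha₁ : W.a₁ = X) (ha₂ : W.a₂ = a₂) (ha₃ : W.a₃ = C a * X ^ 6 + C b)
    (ha₄ : W.a₄ = C c * X ^ 8 + C d) (ha₆ : W.a₆ = a₆)
    (h : (X + 1) ^ 19 ∣ W.Δ) :
    W.Δ = 0 := by
  have hb₈ := WeierstrassCurve.natDegree_b₈_le h₂ h₆ ha₁ ha₂ ha₃ ha₄ ha₆
  have hΔ := WeierstrassCurve.Δ_eq_X_pow_four_mul_b₈_add_of_char_two ha₁ ha₃
  have hΔ₂₄ : W.Δ.natDegree ≤ 24 := by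
    rw [hΔ]
    compute_degree
    omega
  have hsum {k : ℕ} (hk₁ : 1 ≤ k) (hk₃ : k ≤ 3) :
      W.Δ.coeff k + W.Δ.coeff (k + 20) = W.Δ.coeff 2 + W.Δ.coeff 22 :=
    coeff_add_coeff_add_twenty_eq_of_X_add_one_pow_nineteen_dvd hΔ₂₄ h hk₁ hk₃
      (by norm_num) (by norm_num)
  obtain ⟨hs₁, hs₂, hs₃⟩ := WeierstrassCurve.coeff_Δ_add_coeff_Δ_add_twenty hb₈ ha₁ ha₃
  have ha : a = 0 := pow_eq_zero_iff three_ne_zero |>.mp <| by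
    rw [← hs₁, hsum le_rfl (by norm_num), hs₂]
  have hb : b = 0 := pow_eq_zero_iff three_ne_zero |>.mp <| by
    rw [← hs₃, hsum (by norm_num) le_rfl, hs₂]
  subst ha hb
  have hΔ₀ : W.Δ = X ^ 4 * W.b₈ := by simpa using hΔ
  refine eq_zero_of_X_pow_dvd_of_X_add_one_pow_dvd (m := 4) ⟨_, hΔ₀⟩ h ?_
  rw [hΔ₀]
  compute_degree
  omega
end

section
/- If t⁵ divides the discriminant Δ of W in K[t], then b = 0 and d = 0. -/
open Polynomial

/-- Case (iii): `a₁ = t`. If `t⁵ ∣ Δ`, then `b = 0` and `d = 0`. -/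
theorem discriminant_t_five_dvd_case_iii (K : Type*) [Field K] [CharP K 2]
    (a b c d : K) (a₂ a₆ : K[X]) (h₂ : a₂.degree ≤ 4) (h₆ : a₆.degree ≤ 12)
    (W : WeierstrassCurve K[X])
    (ha₁ : W.a₁ = X) (ha₂ : W.a₂ = a₂) (ha₃ : W.a₃ = C a * X ^ 6 + C b)
    (ha₄ : W.a₄ = C c * X ^ 8 + C d) (ha₆ : W.a₆ = a₆)
    (h : X ^ 5 ∣ W.Δ) :
    b = 0 ∧ d = 0 := by
  have h2 : (2 : K[X]) = 0 := by
    have := CharP.cast_eq_zero K[X] 2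
    simpa using this
  set v := a₂.divX with hv
  set e := a₂.coeff 0 with he
  have ha2' : a₂ = X * v + C e := (Polynomial.X_mul_divX_add a₂).symm
  set R : K[X] := X * a₆ + (C a * X ^ 6 + C b) * (C c * X ^ 8 + C d) + (X * v + C e) * C a ^ 2 * X ^ 11 + C b ^ 2 * v + C c ^ 2 * X ^ 15 + C a ^ 4 * X ^ 19 + C a ^ 3 * X ^ 16 + C a ^ 2 * C b * X ^ 10 + C a * C b ^ 2 * X ^ 4 with hR
  obtain ⟨r, hr⟩ := h
  have hΔ : W.Δ = (C b ^ 4 + C b ^ 3 * X ^ 3 + (C e * C b ^ 2 + C d ^ 2) * X ^ 4) + X ^ 5 * R := by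
    simp only [WeierstrassCurve.Δ, WeierstrassCurve.b₂, WeierstrassCurve.b₄,
      WeierstrassCurve.b₆, WeierstrassCurve.b₈, ha₁, ha₂, ha₃, ha₄, ha₆, ha2', hR]
    linear_combination ((-216) * a₆ ^ 2 + (-32) * C e ^ 3 * a₆ + 144 * C d * C e * a₆ + 8 * C d ^ 2 * C e ^ 2 + (-32) * C d ^ 3 + (-108) * C b ^ 2 * a₆ + (-8) * C b ^ 2 * C e ^ 3 + 36 * C b ^ 2 * C d * C e + (-14) * C b ^ 4 + (-96) * X * C e ^ 2 * v * a₆ + 144 * X * C d * v * a₆ + 16 * X * C d ^ 2 * C e * v + 72 * X * C b * C e * a₆ + 8 * X * C b * C d * C e ^ 2 + (-48) * X * C b * C d ^ 2 + (-24) * X * C b ^ 2 * C e ^ 2 * v + 36 * X * C b ^ 2 * C d * v + 18 * X * C b ^ 3 * C e + (-96) * X ^ 2 * C e * v ^ 2 * a₆ + (-24) * X ^ 2 * C e ^ 2 * a₆ + 36 * X ^ 2 * C d * a₆ + 8 * X ^ 2 * C d ^ 2 * v ^ 2 + 4 * X ^ 2 * C d ^ 2 * C e + 72 * X ^ 2 *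 C b * v * a₆ + 16 * X ^ 2 * C b * C d * C e * v + (-24) * X ^ 2 * C b ^ 2 * C e * v ^ 2 + (-4) * X ^ 2 * C b ^ 2 * C e ^ 2 + (-15) * X ^ 2 * C b ^ 2 * C d + 18 * X ^ 2 * C b ^ 3 * v + (-32) * X ^ 3 * v ^ 3 * a₆ + (-48) * X ^ 3 * C e * v * a₆ + 4 * X ^ 3 * C d ^ 2 * v + 18 * X ^ 3 * C b * a₆ + 8 * X ^ 3 * C b * C d * v ^ 2 + 4 * X ^ 3 * C b * C d * C e + (-8) * X ^ 3 * C b ^ 2 * v ^ 3 + (-8) * X ^ 3 * C b ^ 2 * C e * v + (-24) * X ^ 4 * v ^ 2 * a₆ + (-6) * X ^ 4 * C e * a₆ + 4 * X ^ 4 * C b * C d * v + (-4) * X ^ 4 * C b ^ 2 * v ^ 2 + (-1) * X ^ 4 * C b ^ 2 * C e + (-6) * X ^ 5 * v * a₆ + (-1) * X ^ 5 * C b ^ 2 * v + (-1) * X ^ 6 * a₆ + (-216) * X ^ 6 * C a * C b * a₆ + (-16) * X ^ 6 * C a * C b * C e ^ 3 + 72 * X ^ 6 * C a * C b * C d * C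 e + (-54) * X ^ 6 * C a * C b ^ 3 + 72 * X ^ 7 * C a * C e * a₆ + 8 * X ^ 7 * C a * C d * C e ^ 2 + (-48) * X ^ 7 * C a * C d ^ 2 + (-48) * X ^ 7 * C a * C b * C e ^ 2 * v + 72 * X ^ 7 * C a * C b * C d * v + 54 * X ^ 7 * C a * C b ^ 2 * C e + 144 * X ^ 8 * C c * C e * a₆ + 16 * X ^ 8 * C c * C d * C e ^ 2 + (-96) * X ^ 8 * C c * C d ^ 2 + 36 * X ^ 8 * C b ^ 2 * C c * C e + 72 * X ^ 8 * C a * v * a₆ + 16 * X ^ 8 * C a * C d * C e * v + (-48) * X ^ 8 * C a * C b * C e * v ^ 2 + (-8) * X ^ 8 * C a * C b * C e ^ 2 + (-30) * X ^ 8 * C a * C b * C d + 54 * X ^ 8 * C a * C b ^ 2 * v + 144 * X ^ 9 * C c * v * a₆ + 32 * X ^ 9 * C c * C d * C e * v + 8 * X ^ 9 * C b * C c * C e ^ 2 + (-96) * X ^ 9 * C b * C c * C d + 36 * X ^ 9 * C b ^ 2 * C c * v + 18 * X ^ 9 * C a * a₆ + 8 * X ^ 9 * C a * C d * v ^ 2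 + 4 * X ^ 9 * C a * C d * C e + (-16) * X ^ 9 * C a * C b * v ^ 3 + (-16) * X ^ 9 * C a * C b * C e * v + X ^ 9 * C a * C b ^ 2 + 36 * X ^ 10 * C c * a₆ + 16 * X ^ 10 * C c * C d * v ^ 2 + 8 * X ^ 10 * C c * C d * C e + 16 * X ^ 10 * C b * C c * C e * v + (-15) * X ^ 10 * C b ^ 2 * C c + 4 * X ^ 10 * C a * C d * v + (-8) * X ^ 10 * C a * C b * v ^ 2 + (-1) * X ^ 10 * C a * C b * C e + 8 * X ^ 11 * C c * C d * v + 8 * X ^ 11 * C b * C c * v ^ 2 + 4 * X ^ 11 * C b * C c * C e + (-1) * X ^ 11 * C a * C b * v + X ^ 12 * C c * C d + 4 * X ^ 12 * C b * C c * v + (-108) * X ^ 12 * C a ^ 2 * a₆ + (-8) * X ^ 12 * C a ^ 2 * C e ^ 3 + 36 * X ^ 12 * C a ^ 2 * C d * C e + (-81) * X ^ 12 * C a ^ 2 * C b ^ 2 + (-24) * X ^ 13 * C a ^ 2 * C e ^ 2 * v + 36 * X ^ 13 * C a ^ 2 * C d * v + 54 * X ^ 13 * C a ^ 2 * C b * C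 e + 72 * X ^ 14 * C a * C b * C c * C e + (-24) * X ^ 14 * C a ^ 2 * C e * v ^ 2 + (-4) * X ^ 14 * C a ^ 2 * C e ^ 2 + (-15) * X ^ 14 * C a ^ 2 * C d + 54 * X ^ 14 * C a ^ 2 * C b * v + 8 * X ^ 15 * C a * C c * C e ^ 2 + (-96) * X ^ 15 * C a * C c * C d + 72 * X ^ 15 * C a * C b * C c * v + (-8) * X ^ 15 * C a ^ 2 * v ^ 3 + (-8) * X ^ 15 * C a ^ 2 * C e * v + X ^ 15 * C a ^ 2 * C b + 8 * X ^ 16 * C c ^ 2 * C e ^ 2 + (-96) * X ^ 16 * C c ^ 2 * C d + 16 * X ^ 16 * C a * C c * C e * v + (-30) * X ^ 16 * C a * C b * C c + (-4) * X ^ 16 * C a ^ 2 * v ^ 2 + (-1) * X ^ 16 * C a ^ 2 * C e + 16 * X ^ 17 * C c ^ 2 * C e * v + (-48) * X ^ 17 * C b * C c ^ 2 + 8 * X ^ 17 * C a * C c * v ^ 2 + 4 * X ^ 17 * C a * C c * C e + (-1) * X ^ 17 * C a ^ 2 * v + 8 * X ^ 18 * C c ^ 2 * v ^ 2 + 4 *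 X ^ 18 * C c ^ 2 * C e + 4 * X ^ 18 * C a * C c * v + (-54) * X ^ 18 * C a ^ 3 * C b + 4 * X ^ 19 * C c ^ 2 * v + 18 * X ^ 19 * C a ^ 3 * C e + 36 * X ^ 20 * C a ^ 2 * C c * C e + 18 * X ^ 20 * C a ^ 3 * v + 36 * X ^ 21 * C a ^ 2 * C c * v + (-15) * X ^ 22 * C a ^ 2 * C c + (-48) * X ^ 23 * C a * C c ^ 2 + (-32) * X ^ 24 * C c ^ 3 + (-14) * X ^ 24 * C a ^ 4) * h2
  have hP : C b ^ 4 + C b ^ 3 * X ^ 3 + (C e * C b ^ 2 + C d ^ 2) * X ^ 4 = (r - R) * X ^ 5 := by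
    rw [sub_mul, mul_comm r, mul_comm R, ← hr, hΔ]; ring
  have hb : b = 0 := by
    have h0 := congrArg (fun p => p.coeff 0) hP
    simp only [Polynomial.coeff_mul_X_pow'] at h0
    norm_num at h0
    simp only [← map_pow, ← map_mul, ← map_add, Polynomial.coeff_add,
      Polynomial.coeff_C_mul, Polynomial.coeff_C, Polynomial.coeff_X_pow] at h0
    norm_num at h0
    exact h0
  subst hb
  refine ⟨rfl, ?_⟩
  have h4 := congrArg (fun p => p.coeff 4) hP
  simp only [Polynomial.coeff_mul_X_pow'] at h4
  norm_num at h4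
  simp only [← map_pow, ← map_mul, ← map_add, Polynomial.coeff_add,
    Polynomial.coeff_C_mul, Polynomial.coeff_C, Polynomial.coeff_X_pow] at h4
  norm_num at h4
  exact h4
end

section
/- Let K be a field of characteristic 3 and let W be the Weierstrass curve over the polynomial ring K[s] with coefficients a₁ = 0, a₂ = −s·(1 + 2s²), a₃ = 0, a₄ = −2s⁶·(1 + s²), a₆ = −s¹¹. Then the discriminant of W satisfies Δ = s²⁰·(2s⁴ + s² + 1); in particular s²⁰ divides Δ but s²¹ does not. -/
open Polynomial

/-- The good-reduction model at `p = 3` of the `[1,1,1,1,14*]` elliptic K3 surface: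
the Weierstrass curve `y² = x³ − s(1+2s²)x² − 2s⁶(1+s²)x − s¹¹` over `K[s]`, `char K = 3`,
has discriminant `Δ = s²⁰(2s⁴ + s² + 1)`; in particular `s²⁰ ∣ Δ` but `s²¹ ∤ Δ`. -/
theorem discriminant_fourteen_star_char_three (K : Type*) [Field K] [CharP K 3]
    (W : WeierstrassCurve K[X])
    (ha₁ : W.a₁ = 0) (ha₂ : W.a₂ = -(X * (1 + 2 * X ^ 2))) (ha₃ : W.a₃ = 0)
    (ha₄ : W.a₄ = -(2 * X ^ 6 * (1 + X ^ 2))) (ha₆ : W.a₆ = -X ^ 11) :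
    W.Δ = X ^ 20 * (2 * X ^ 4 + X ^ 2 + 1) ∧ X ^ 20 ∣ W.Δ ∧ ¬ X ^ 21 ∣ W.Δ := by
  have h3 : (3 : K[X]) = 0 := by exact_mod_cast CharP.cast_eq_zero K[X] 3
  have hΔ : W.Δ = X ^ 20 * (2 * X ^ 4 + X ^ 2 + 1) := by
    rw [WeierstrassCurve.Δ, WeierstrassCurve.b₂, WeierstrassCurve.b₄,
      WeierstrassCurve.b₆, WeierstrassCurve.b₈, ha₁, ha₂, ha₃, ha₄, ha₆]
    linear_combination (21 * X ^ 20 + 69 * X ^ 22 + 170 * X ^ 24) * h3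
  refine ⟨hΔ, ⟨_, hΔ⟩, ?_⟩
  rw [hΔ]
  intro h
  have hx : (X : K[X]) ^ 20 ≠ 0 := pow_ne_zero _ X_ne_zero
  have h' : X ∣ (2 * X ^ 4 + X ^ 2 + 1 : K[X]) := by
    have : (X : K[X]) ^ 20 * X ∣ X ^ 20 * (2 * X ^ 4 + X ^ 2 + 1) := by
      rwa [← pow_succ]
    exact (mul_dvd_mul_iff_left hx).mp this
  have := h'.trans dvd_rfl
  obtain ⟨q, hq⟩ := h'
  have := congrArg (Polynomial.eval 0) hq
  simp at this
end
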